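/- arXiv:1511.07806 — 5 statements merged into one kernel-verified Lean document; each statement's English description precedes it below -/
import Mathlib

section
/- Let Φ : [0,∞) → [0,∞) be a function satisfying Φ(0) = 0, Φ ∈ L¹([0,∞)), and Φ uniformly Hölder continuous on [0,∞) with exponent α ∈ (0,1] and constant H > 0 (i.e., |Φ(x) − Φ(y)| ≤ H |x−y|^α for all x, y ≥ 0). Then sup_{x ≥ 0} Φ(x) ≤ H^{1/(1+α)} ( ((1+α)/α) ∫₀^∞ Φ(x) dx )^{α/(1+α)}. -/
open Real MeasureTheory Set Filter Topology

noncomputable section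

/-- **Lemma 4.2 (passing from `L¹` to `L^∞`).** Let `Φ : [0,∞) → [0,∞)` satisfy
`Φ(0) = 0`, `Φ ∈ L¹([0,∞))` and `Φ` uniformly Hölder continuous on `[0,∞)` with
exponent `α ∈ (0,1]` and constant `H > 0`.  Then
`sup_{x ≥ 0} Φ(x) ≤ H^{1/(1+α)} (((1+α)/α) ∫₀^∞ Φ)^{α/(1+α)}`. -/
theorem sup_le_of_L1_and_Holder
    (α H : ℝ) (hα : α ∈ Ioc (0 : ℝ) 1) (hH : 0 < H)
    (Φ : ℝ → ℝ)
    (hnn : ∀ x : ℝ, 0 ≤ x → 0 ≤ Φ x)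
    (h0 : Φ 0 = 0)
    (hint : IntegrableOn Φ (Ici 0))
    (hHolder : ∀ x y : ℝ, 0 ≤ x → 0 ≤ y → |Φ x - Φ y| ≤ H * |x - y| ^ α) :
    ∀ x : ℝ, 0 ≤ x →
      Φ x ≤ H ^ (1 / (1 + α))
        * (((1 + α) / α) * ∫ y in Ioi (0 : ℝ), Φ y) ^ (α / (1 + α)) := by
  obtain ⟨hα0, hα1⟩ := hα
  have h1α : (0:ℝ) < 1 + α := by linarith
  set I := ∫ y in Ioi (0:ℝ), Φ y with hIdef
  have hInn : 0 ≤ I := setIntegral_nonneg measurableSet_Ioi fun y hy => hnn y hy.le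
  intro x hx
  rcases le_or_gt (Φ x) 0 with hM | hM
  · exact hM.trans (mul_nonneg (rpow_nonneg hH.le _)
      (rpow_nonneg (mul_nonneg (by positivity) hInn) _))
  set M := Φ x with hMdef
  set r := (M / H) ^ (1/α) with hrdef
  have hMH : 0 < M / H := div_pos hM hH
  have hr : 0 < r := rpow_pos_of_pos hMH _
  have hrα : r ^ α = M / H := by
    rw [hrdef, ← rpow_mul hMH.le, one_div, inv_mul_cancel₀ hα0.ne', rpow_one]
  -- pointwise lower bound on Ioc x (x+r)
  have hpt : ∀ y ∈ Ioc x (x + r), M - H * (y - x) ^ α ≤ Φ y := by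
    intro y hy
    have hy0 : 0 ≤ y := hx.trans hy.1.le
    have := hHolder x y hx hy0
    have habs : |x - y| = y - x := by
      rw [abs_sub_comm, abs_of_nonneg (by linarith [hy.1.le])]
    rw [habs] at this
    have h2 : Φ x - Φ y ≤ H * (y - x) ^ α := (le_abs_self _).trans this
    linarith
  -- integrability of the lower-bound function
  have hc2 : Continuous fun y : ℝ => H * (y - x) ^ α := by
    apply Continuous.mul continuous_const
    exact Continuous.rpow_const (by continuity) fun y => Or.inr hα0.le
  have hcont : Continuous fun y : ℝ => M - H * (y - x) ^ α := continuous_const.sub hc2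
  have hsub : Ioc x (x + r) ⊆ Ici 0 := fun y hy => hx.trans hy.1.le
  have hΦint : IntegrableOn Φ (Ioc x (x + r)) := hint.mono_set hsub
  -- value of the model integral
  have hval : ∫ y in Ioc x (x + r), (M - H * (y - x) ^ α)
      = M * r - H * (r ^ (α + 1) / (α + 1)) := by
    rw [← intervalIntegral.integral_of_le (by linarith : x ≤ x + r)]
    rw [intervalIntegral.integral_sub intervalIntegrable_const
      (hc2.intervalIntegrable x (x+r))]
    rw [intervalIntegral.integral_const, intervalIntegral.integral_const_mul]
    have : ∫ y in x..(x+r), (y - x) ^ α = ∫ y in (0:ℝ)..r, y ^ α := by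
      have := intervalIntegral.integral_comp_sub_right (fun y => y ^ α) x (a := x) (b := x + r)
      simpa using this
    rw [this, integral_rpow (Or.inl (by linarith)),
      Real.zero_rpow (by positivity : (0:ℝ) < α + 1).ne', smul_eq_mul]
    ring
  -- chain of inequalities
  have hstep1 : ∫ y in Ioc x (x + r), (M - H * (y - x) ^ α) ≤ ∫ y in Ioc x (x + r), Φ y := by
    apply setIntegral_mono_on (hcont.integrableOn_Ioc) hΦint measurableSet_Ioc hpt
  have hstep2 : ∫ y in Ioc x (x + r), Φ y ≤ I := by
    have hss : Ioc x (x + r) ⊆ Ioi 0 := fun y hy => lt_of_le_of_lt hx hy.1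
    exact setIntegral_mono_set (hint.mono_set Ioi_subset_Ici_self)
      (ae_restrict_of_forall_mem measurableSet_Ioi fun y hy => hnn y hy.le)
      (HasSubset.Subset.eventuallyLE hss)
  have hHr : H * r ^ α = M := by rw [hrα]; field_simp
  have hkey : α / (1 + α) * (M * r) ≤ I := by
    have h3 : M * r - H * (r ^ (α + 1) / (α + 1)) ≤ I := by
      rw [← hval]; exact hstep1.trans hstep2
    have h4 : H * r ^ (α + 1) = M * r := by
      rw [rpow_add hr, rpow_one]; rw [mul_comm (r ^ α) r, ← mul_assoc, mul_comm H r, mul_assoc, hHr]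
      ring
    have h4' : H * (r ^ (α + 1) / (α + 1)) = M * r / (1 + α) := by
      rw [← mul_div_assoc, h4, add_comm α 1]
    have h6 : M * r - M * r / (1 + α) ≤ I := by rw [← h4']; exact h3
    have heq : α / (1 + α) * (M * r) = M * r - M * r / (1 + α) := by field_simp; ring
    linarith
  -- conclude
  have hMr : M * r ≤ (1 + α) / α * I := by
    have h7 := mul_le_mul_of_nonneg_left hkey (le_of_lt (div_pos h1α hα0))
    calc M * r = (1 + α) / α * (α / (1 + α) * (M * r)) := by field_simp
    _ ≤ (1 + α) / α * I := h7
  have hMpow : M ^ ((1 + α) / α) ≤ H ^ (1/α) * ((1 + α) / α * I) := by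
    have h5 : M ^ ((1 + α) / α) = H ^ (1/α) * (M * r) := by
      have hM1α : M ^ (1/α) = H ^ (1/α) * r := by
        rw [← hHr, mul_rpow hH.le (rpow_nonneg hr.le _), ← rpow_mul hr.le,
          mul_one_div, div_self hα0.ne', rpow_one]
      rw [show (1+α)/α = 1/α + 1 by field_simp, rpow_add hM, rpow_one, hM1α]
      ring
    rw [h5]
    exact mul_le_mul_of_nonneg_left hMr (rpow_nonneg hH.le _)
  have hfin : M = (M ^ ((1 + α) / α)) ^ (α / (1 + α)) := by
    rw [← rpow_mul hM.le, div_mul_div_comm, mul_comm (1+α) α, div_self (by positivity), rpow_one]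
  rw [hfin]
  calc (M ^ ((1 + α) / α)) ^ (α / (1 + α))
      ≤ (H ^ (1/α) * ((1 + α) / α * I)) ^ (α / (1 + α)) :=
        rpow_le_rpow (rpow_nonneg hM.le _) hMpow (by positivity)
    _ = H ^ (1 / (1 + α)) * ((1 + α) / α * I) ^ (α / (1 + α)) := by
        rw [mul_rpow (rpow_nonneg hH.le _) (by positivity), ← rpow_mul hH.le]
        congr 2
        field_simp
end
end

section
/- Let m > 1, c > 0, and K₀ > 0. On the open set Ω = { ξ ∈ ℝ : c − K₀ e^{(m−1)ξ/m} > 0 }, the function f(ξ) = ( c − K₀ e^{(m−1)ξ/m} )^{1/(m−1)} is differentiable, f^m is differentiable, and f satisfies the traveling-wave ordinary differential equation (f^m)'(ξ) − f^m(ξ) = −c f(ξ) for every ξ ∈ Ω. -/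
/-!
Write `g = c - K₀ e^{(m-1)ξ/m}`, so `f = g^{1/(m-1)}` and `f^m = g^{m/(m-1)} = f g`. The inner
function solves the linear equation `g' = ((m-1)/m) (g - c)`, and the chain rule gives
`(f^m)' = (m/(m-1)) g^{1/(m-1)} g' = f (g - c) = f^m - c f`.
-/

open Real

theorem hasDerivAt_rpow_rpow {g : ℝ → ℝ} {g' ξ : ℝ} (p q : ℝ) (hg : HasDerivAt g g' ξ)
    (hpos : 0 < g ξ) :
    HasDerivAt (fun x => (g x ^ p) ^ q) (g' * (p * q) * g ξ ^ (p * q - 1)) ξ := by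
  have hev : (fun x => g x ^ (p * q)) =ᶠ[nhds ξ] fun x => (g x ^ p) ^ q := by
    filter_upwards [hg.continuousAt.eventually (lt_mem_nhds hpos)] with x hx
    exact rpow_mul hx.le p q
  exact (hg.rpow_const (Or.inl hpos.ne')).congr_of_eventuallyEq hev.symm

theorem hasDerivAt_const_sub_mul_exp_mul_div (c K a b ξ : ℝ) :
    HasDerivAt (fun x => c - K * exp (a * x / b))
      (a / b * ((c - K * exp (a * ξ / b)) - c)) ξ := by
  have hlin : HasDerivAt (fun x => a * x / b) (a / b) ξ := by
    simpa using ((hasDerivAt_id ξ).const_mul a).div_const b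
  exact ((hlin.exp.const_mul K).const_sub c).congr_deriv (by ring)

theorem one_div_sub_one_mul_self {m : ℝ} (hm : m ≠ 1) : 1 / (m - 1) * m = 1 / (m - 1) + 1 := by
  have : m - 1 ≠ 0 := sub_ne_zero.mpr hm
  field_simp
  ring

theorem travelingWave_ODE_general
    (m c K₀ : ℝ) (hm : 1 < m) :
    ∀ ξ : ℝ, 0 < c - K₀ * Real.exp ((m - 1) * ξ / m) →
      DifferentiableAt ℝ
        (fun x : ℝ => (c - K₀ * Real.exp ((m - 1) * x / m)) ^ (1 / (m - 1))) ξ ∧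
      DifferentiableAt ℝ
        (fun x : ℝ => ((c - K₀ * Real.exp ((m - 1) * x / m)) ^ (1 / (m - 1))) ^ m) ξ ∧
      deriv (fun x : ℝ => ((c - K₀ * Real.exp ((m - 1) * x / m)) ^ (1 / (m - 1))) ^ m) ξ
          - ((c - K₀ * Real.exp ((m - 1) * ξ / m)) ^ (1 / (m - 1))) ^ m
        = -(c * (c - K₀ * Real.exp ((m - 1) * ξ / m)) ^ (1 / (m - 1))) := by
  intro ξ hξ
  have hg := hasDerivAt_const_sub_mul_exp_mul_div c K₀ (m - 1) m ξ
  have hF := hasDerivAt_rpow_rpow (1 / (m - 1)) m hg hξ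
  refine ⟨(hg.rpow_const (Or.inl hξ.ne')).differentiableAt, hF.differentiableAt, ?_⟩
  rw [hF.deriv, ← rpow_mul hξ.le, one_div_sub_one_mul_self hm.ne', add_sub_cancel_right,
    rpow_add_one hξ.ne']
  have : m - 1 ≠ 0 := sub_ne_zero.mpr hm.ne'
  have : m ≠ 0 := by positivity
  field_simp
  ring

/-- **Traveling wave ODE (Section 4.2).** Let `m > 1`, `c > 0`, `K₀ > 0`.  On the open
set `Ω = {ξ : c - K₀ e^{(m-1)ξ/m} > 0}`, the function
`f(ξ) = (c - K₀ e^{(m-1)ξ/m})^{1/(m-1)}` is differentiable, `f^m` is differentiable,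
and `f` satisfies the traveling-wave ODE `(f^m)'(ξ) - f^m(ξ) = -c f(ξ)` on `Ω`. -/
theorem travelingWave_ODE
    (m c K₀ : ℝ) (hm : 1 < m) (hc : 0 < c) (hK₀ : 0 < K₀) :
    ∀ ξ : ℝ, 0 < c - K₀ * Real.exp ((m - 1) * ξ / m) →
      DifferentiableAt ℝ
        (fun x : ℝ => (c - K₀ * Real.exp ((m - 1) * x / m)) ^ (1 / (m - 1))) ξ ∧
      DifferentiableAt ℝ
        (fun x : ℝ => ((c - K₀ * Real.exp ((m - 1) * x / m)) ^ (1 / (m - 1))) ^ m) ξ ∧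
      deriv (fun x : ℝ => ((c - K₀ * Real.exp ((m - 1) * x / m)) ^ (1 / (m - 1))) ^ m) ξ
          - ((c - K₀ * Real.exp ((m - 1) * ξ / m)) ^ (1 / (m - 1))) ^ m
        = -(c * (c - K₀ * Real.exp ((m - 1) * ξ / m)) ^ (1 / (m - 1))) :=
  travelingWave_ODE_general m c K₀ hm
end

section
/- Let m > 1, c > 0, and s₀ ∈ ℝ, and define W_{s₀}(s,t) = [ c − e^{(m−1)(s − s₀ − ct)/m} ]₊^{1/(m−1)} for (s,t) ∈ ℝ × (0,∞). Then W_{s₀} is continuous on ℝ × (0,∞), satisfies lim_{s→−∞} W_{s₀}(s,t) = c^{1/(m−1)} and W_{s₀}(s,t) = 0 for s ≥ s₀ + ct + (m/(m−1)) log c, and on the open set { (s,t) : c − e^{(m−1)(s − s₀ − ct)/m} > 0 } it is a classical solution of the porous medium equation with convection: ∂_t W_{s₀}(s,t) = ∂_ss(W_{s₀}^m)(s,t) − ∂_s(W_{s₀}^m)(s,t). -/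
/-!
`W(s,t) = f(s - s₀ - ct)` is a traveling wave of speed `c`, so the equation reduces to the
profile ODE `-c f' = (f^m)'' - (f^m)'`. Where `f > 0`, write `e = exp((m-1)ξ/m)`: then
`f^m = (c - e) f` and `(f^m)' = -e f`, i.e. `(f^m)' = f^m - c f`, and differentiating this
first-order identity once more gives the profile ODE.
-/

open Real Set Filter Topology

noncomputable section

theorem travelingWave_pde_of_profile_ode {f g : ℝ → ℝ} {c s₀ s t : ℝ}
    (hf : DifferentiableAt ℝ f (s - s₀ - c * t)) (hg : DifferentiableAt ℝ g (s - s₀ - c * t))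
    (hode : HasDerivAt (deriv g)
      (deriv g (s - s₀ - c * t) - c * deriv f (s - s₀ - c * t)) (s - s₀ - c * t)) :
    DifferentiableAt ℝ (fun τ => f (s - s₀ - c * τ)) t ∧
    DifferentiableAt ℝ (fun σ => g (σ - s₀ - c * t)) s ∧
    DifferentiableAt ℝ (deriv fun σ => g (σ - s₀ - c * t)) s ∧
    deriv (fun τ => f (s - s₀ - c * τ)) t =
      iteratedDeriv 2 (fun σ => g (σ - s₀ - c * t)) s - deriv (fun σ => g (σ - s₀ - c * t)) s := by
  simp only [sub_sub] at hf hg hode ⊢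
  have hderiv : deriv (fun σ => g (σ - (s₀ + c * t))) = fun σ => deriv g (σ - (s₀ + c * t)) :=
    funext fun σ => deriv_comp_sub_const _ _ _
  have htime : HasDerivAt (fun τ => f (s - (s₀ + c * τ))) (-c * deriv f (s - (s₀ + c * t))) t := by
    have := (((hasDerivAt_id' t).const_mul c).const_add s₀).const_sub s
    exact (hf.hasDerivAt.comp t this).congr_deriv (by ring)
  have hode' : HasDerivAt (deriv fun σ => g (σ - (s₀ + c * t)))
      (deriv g (s - (s₀ + c * t)) - c * deriv f (s - (s₀ + c * t))) s := by
    rw [hderiv]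
    exact hode.comp_sub_const s _
  refine ⟨htime.differentiableAt, differentiableAt_comp_sub_const.mpr hg,
    hode'.differentiableAt, ?_⟩
  rw [iteratedDeriv_succ, iteratedDeriv_one, hode'.deriv, htime.deriv, hderiv]
  ring

def waveBase (m c ξ : ℝ) : ℝ := c - exp ((m - 1) * ξ / m)

def waveProfile (m c ξ : ℝ) : ℝ := max (waveBase m c ξ) 0 ^ (1 / (m - 1))

theorem continuous_max_zero_rpow {p : ℝ} (hp : 0 ≤ p) : Continuous fun x : ℝ => max x 0 ^ p :=
  (continuous_id.max continuous_const).rpow_const fun _ => Or.inr hp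

section Profile

variable {m c : ℝ}

theorem continuous_waveBase : Continuous (waveBase m c) := by
  unfold waveBase; fun_prop

theorem isOpen_waveBase_pos : IsOpen {ξ | 0 < waveBase m c ξ} :=
  isOpen_lt continuous_const continuous_waveBase

theorem hasDerivAt_waveBase (ξ : ℝ) :
    HasDerivAt (waveBase m c) (-((m - 1) / m) * (c - waveBase m c ξ)) ξ := by
  have := ((((hasDerivAt_id' ξ).const_mul (m - 1)).div_const m).exp).const_sub c
  exact this.congr_deriv (by simp only [waveBase]; ring)

theorem tendsto_waveBase_atBot (hm : 1 < m) : Tendsto (waveBase m c) atBot (𝓝 c) := by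
  have harg : Tendsto (fun ξ : ℝ => (m - 1) * ξ / m) atBot atBot :=
    (tendsto_id.const_mul_atBot (by linarith)).atBot_div_const (by linarith)
  show Tendsto (fun ξ => c - exp ((m - 1) * ξ / m)) atBot (𝓝 c)
  simpa using (tendsto_exp_atBot.comp harg).const_sub c

theorem continuous_waveProfile (hm : 1 ≤ m) : Continuous (waveProfile m c) :=
  (continuous_max_zero_rpow (one_div_nonneg.mpr (sub_nonneg.mpr hm))).comp continuous_waveBase

theorem tendsto_waveProfile_atBot (hm : 1 < m) (hc : 0 ≤ c) :
    Tendsto (waveProfile m c) atBot (𝓝 (c ^ (1 / (m - 1)))) := by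
  have := ((continuous_max_zero_rpow (one_div_nonneg.mpr (sub_nonneg.mpr hm.le))).tendsto c).comp
    (tendsto_waveBase_atBot hm)
  rwa [Function.comp_def, max_eq_left hc] at this

theorem waveProfile_eq_zero (hm : 1 < m) (hc : 0 < c) {ξ : ℝ}
    (hξ : m / (m - 1) * Real.log c ≤ ξ) : waveProfile m c ξ = 0 := by
  have hm1 : 0 < m - 1 := by linarith
  have hlog : Real.log c ≤ (m - 1) * ξ / m := by
    rw [le_div_iff₀ (by linarith)]
    calc Real.log c * m = (m - 1) * (m / (m - 1) * Real.log c) := by field_simp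
      _ ≤ (m - 1) * ξ := mul_le_mul_of_nonneg_left hξ hm1.le
  have hbase : waveBase m c ξ ≤ 0 := sub_nonpos.mpr ((Real.log_le_iff_le_exp hc).mp hlog)
  rw [waveProfile, max_eq_right hbase, zero_rpow (one_div_pos.mpr hm1).ne']

theorem waveProfile_eventuallyEq {ξ : ℝ} (hξ : 0 < waveBase m c ξ) :
    waveProfile m c =ᶠ[𝓝 ξ] fun η => waveBase m c η ^ (1 / (m - 1)) := by
  filter_upwards [isOpen_waveBase_pos.mem_nhds hξ] with η hη
  rw [waveProfile, max_eq_left hη.le]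

theorem differentiableAt_waveProfile {ξ : ℝ} (hξ : 0 < waveBase m c ξ) :
    DifferentiableAt ℝ (waveProfile m c) ξ :=
  (((hasDerivAt_waveBase ξ).differentiableAt.rpow_const (Or.inl hξ.ne'))).congr_of_eventuallyEq
    (waveProfile_eventuallyEq hξ)

theorem waveProfile_rpow_eq (hm : m ≠ 1) {ξ : ℝ} (hξ : 0 ≤ waveBase m c ξ) :
    waveProfile m c ξ ^ m = waveBase m c ξ ^ (m / (m - 1)) := by
  have hm1 : m - 1 ≠ 0 := sub_ne_zero.mpr hm
  rw [waveProfile, max_eq_left hξ, ← rpow_mul hξ]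
  field_simp

theorem hasDerivAt_waveProfile_rpow (hm : 1 < m) {ξ : ℝ} (hξ : 0 < waveBase m c ξ) :
    HasDerivAt (fun η => waveProfile m c η ^ m)
      (waveProfile m c ξ ^ m - c * waveProfile m c ξ) ξ := by
  have hm1 : m - 1 ≠ 0 := by linarith
  have heq : (fun η => waveProfile m c η ^ m) =ᶠ[𝓝 ξ] fun η => waveBase m c η ^ (m / (m - 1)) := by
    filter_upwards [isOpen_waveBase_pos.mem_nhds hξ] with η hη
    exact waveProfile_rpow_eq hm.ne' hη.le
  refine HasDerivAt.congr_of_eventuallyEq ?_ heq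
  refine ((hasDerivAt_waveBase ξ).rpow_const (p := m / (m - 1)) (Or.inl hξ.ne')).congr_deriv ?_
  have hexp : m / (m - 1) = 1 / (m - 1) + 1 := by field_simp; ring
  rw [waveProfile_rpow_eq hm.ne' hξ.le, waveProfile, max_eq_left hξ.le, hexp,
    add_sub_cancel_right, rpow_add_one hξ.ne']
  field_simp
  ring

theorem hasDerivAt_deriv_waveProfile_rpow (hm : 1 < m) {ξ : ℝ} (hξ : 0 < waveBase m c ξ) :
    HasDerivAt (deriv fun η => waveProfile m c η ^ m)
      (deriv (fun η => waveProfile m c η ^ m) ξ - c * deriv (waveProfile m c) ξ) ξ := by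
  have heq : (deriv fun η => waveProfile m c η ^ m) =ᶠ[𝓝 ξ]
      fun η => waveProfile m c η ^ m - c * waveProfile m c η := by
    filter_upwards [isOpen_waveBase_pos.mem_nhds hξ] with η hη
    exact (hasDerivAt_waveProfile_rpow hm hη).deriv
  refine HasDerivAt.congr_of_eventuallyEq ?_ heq
  exact (hasDerivAt_waveProfile_rpow hm hξ).differentiableAt.hasDerivAt.sub
    ((differentiableAt_waveProfile hξ).hasDerivAt.const_mul c)

end Profile

/-- **Traveling waves for the PME with convection (Eq. (4.5)).** Let `m > 1`, `c > 0`,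
`s₀ ∈ ℝ` and `W_{s₀}(s,t) = [c - e^{(m-1)(s-s₀-ct)/m}]₊^{1/(m-1)}`.  Then `W_{s₀}` is
continuous on `ℝ × (0,∞)`, tends to `c^{1/(m-1)}` as `s → -∞` (for each `t > 0`),
vanishes for `s ≥ s₀ + ct + (m/(m-1)) log c`, and on the open set where
`c - e^{(m-1)(s-s₀-ct)/m} > 0` it is a classical solution of
`∂ₜ W = ∂ₛₛ(W^m) - ∂ₛ(W^m)`. -/
theorem travelingWave_solution
    (m c s₀ : ℝ) (hm : 1 < m) (hc : 0 < c)
    (W : ℝ → ℝ → ℝ)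
    (hW : ∀ s t, W s t =
      (max (c - Real.exp ((m - 1) * (s - s₀ - c * t) / m)) 0) ^ (1 / (m - 1))) :
    ContinuousOn (fun p : ℝ × ℝ => W p.1 p.2) (univ ×ˢ Ioi 0) ∧
    (∀ t : ℝ, 0 < t → Tendsto (fun s => W s t) atBot (𝓝 (c ^ (1 / (m - 1))))) ∧
    (∀ t : ℝ, 0 < t → ∀ s : ℝ, s₀ + c * t + (m / (m - 1)) * Real.log c ≤ s →
      W s t = 0) ∧
    (∀ s t : ℝ, 0 < t → 0 < c - Real.exp ((m - 1) * (s - s₀ - c * t) / m) →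
      DifferentiableAt ℝ (fun τ => W s τ) t ∧
      DifferentiableAt ℝ (fun σ => W σ t ^ m) s ∧
      DifferentiableAt ℝ (deriv (fun σ => W σ t ^ m)) s ∧
      deriv (fun τ => W s τ) t
        = iteratedDeriv 2 (fun σ => W σ t ^ m) s - deriv (fun σ => W σ t ^ m) s) := by
  obtain rfl : W = fun s t => waveProfile m c (s - s₀ - c * t) := funext₂ hW
  refine ⟨?_, fun t _ => ?_, fun t _ s hs => ?_, fun s t _ hpos => ?_⟩
  · exact ((continuous_waveProfile hm.le).comp (by fun_prop)).continuousOn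
  · exact (tendsto_waveProfile_atBot hm hc.le).comp
      (tendsto_atBot_add_const_right _ _ (tendsto_atBot_add_const_right _ _ tendsto_id))
  · exact waveProfile_eq_zero hm hc (by linarith)
  · exact travelingWave_pde_of_profile_ode (differentiableAt_waveProfile hpos)
      (hasDerivAt_waveProfile_rpow hm hpos).differentiableAt
      (hasDerivAt_deriv_waveProfile_rpow hm hpos)
end
end

section
/- Let m > 1, K > 0, x₀ > 0, and set c = K^{m−1}. Define U_{x₀}(x,t) = [ K^{m−1} − ( (|x|/x₀) e^{−ct} )^{(m−1)/m} ]₊^{1/(m−1)} for (x,t) ∈ ℝ × (0,∞). Then U_{x₀} is continuous on ℝ × (0,∞) with U_{x₀}(0,t) = K for all t > 0, and on the open set { (x,t) : x ≠ 0 and K^{m−1} − ((|x|/x₀) e^{−ct})^{(m−1)/m} > 0 } it is a classical solution of the one-dimensional nonhomogeneous porous medium equation: ∂_t U_{x₀}(x,t) = x² ∂_xx(U_{x₀}^m)(x,t). -/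
/-!
With `α = (m - 1) / m`, the quantity `B = ((|x| / x₀) e^{-ct})^α` is homogeneous in both
variables: `x ∂ₓB = α B` and `∂ₜB = -cα B`. Where `Z = K^{m-1} - B > 0` we have
`U = Z^{1/(m-1)}` and `U^m = Z^{m/(m-1)}`, so `∂ₓ(U^m) = -Z^{1/(m-1)} B / x` and
`x² ∂ₓₓ(U^m) = K^{m-1} B Z^{1/(m-1)-1} / m`, while `∂ₜU = c B Z^{1/(m-1)-1} / m`;
the two agree exactly because `c = K^{m-1}`.
-/

open Real Set Filter Topology

theorem hasDerivAt_abs_rpow_of_ne_zero {x : ℝ} (hx : x ≠ 0) (α : ℝ) :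
    HasDerivAt (fun ξ => |ξ| ^ α) (α * |x| ^ α / x) x := by
  convert (hasDerivAt_abs hx).rpow_const (p := α) (Or.inl (abs_ne_zero.2 hx)) using 1
  rw [rpow_sub_one (abs_ne_zero.2 hx)]
  obtain hx | hx := hx.lt_or_gt
  · simp only [abs_of_neg hx, _root_.sign_neg hx, SignType.coe_neg, SignType.coe_one]
    field_simp
  · simp only [abs_of_pos hx, sign_pos hx, SignType.coe_one]
    field_simp

theorem hasDerivAt_deriv_of_eventually {f f' : ℝ → ℝ} {x f'' : ℝ}
    (hf : ∀ᶠ ξ in 𝓝 x, HasDerivAt f (f' ξ) ξ) (hf' : HasDerivAt f' f'' x) :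
    HasDerivAt (deriv f) f'' x :=
  hf'.congr_of_eventuallyEq (hf.mono fun _ h => h.deriv)

theorem max_zero_rpow_eventuallyEq {X : Type*} [TopologicalSpace X] {f : X → ℝ} {x : X}
    (hf : ContinuousAt f x) (hx : 0 < f x) (p : ℝ) :
    (fun y => max (f y) 0 ^ p) =ᶠ[𝓝 x] fun y => f y ^ p :=
  (hf.eventually (lt_mem_nhds hx)).mono fun _ hy => congrArg (· ^ p) (max_eq_left hy.le)

noncomputable def profileBase (x₀ c α x t : ℝ) : ℝ := (|x| / x₀ * exp (-c * t)) ^ α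

section profileBase

variable {x₀ c α x t : ℝ}

theorem profileBase_zero_left (hα : α ≠ 0) : profileBase x₀ c α 0 t = 0 := by
  simp [profileBase, zero_rpow hα]

theorem continuous_profileBase (hα : 0 ≤ α) :
    Continuous fun p : ℝ × ℝ => profileBase x₀ c α p.1 p.2 :=
  (((continuous_abs.comp continuous_fst).div_const x₀).mul
    (continuous_exp.comp (continuous_const.mul continuous_snd))).rpow_const
    fun _ => Or.inr hα

theorem profileBase_eq_mul_rpow_abs (hx₀ : 0 ≤ x₀) :
    profileBase x₀ c α x t = (exp (-c * t) / x₀) ^ α * |x| ^ α := by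
  rw [profileBase, ← mul_rpow (by positivity) (abs_nonneg x)]
  congr 1
  ring

theorem profileBase_eq_mul_exp (hx₀ : 0 ≤ x₀) :
    profileBase x₀ c α x t = (|x| / x₀) ^ α * exp (-(c * α) * t) := by
  rw [profileBase, mul_rpow (by positivity) (exp_pos _).le, ← exp_mul]
  congr 2
  ring

theorem hasDerivAt_profileBase_space (hx₀ : 0 ≤ x₀) (hx : x ≠ 0) :
    HasDerivAt (fun ξ => profileBase x₀ c α ξ t) (α * profileBase x₀ c α x t / x) x := by
  simp only [profileBase_eq_mul_rpow_abs hx₀]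
  exact ((hasDerivAt_abs_rpow_of_ne_zero hx α).const_mul _).congr_deriv (by ring)

theorem hasDerivAt_profileBase_time (hx₀ : 0 ≤ x₀) :
    HasDerivAt (fun τ => profileBase x₀ c α x τ)
      (-(c * α) * profileBase x₀ c α x t) t := by
  simp only [profileBase_eq_mul_exp hx₀]
  exact (((hasDerivAt_id' t).const_mul _).exp.const_mul _).congr_deriv (by ring)

end profileBase

noncomputable def profile (m A x₀ c x t : ℝ) : ℝ :=
  max (A - profileBase x₀ c ((m - 1) / m) x t) 0 ^ (1 / (m - 1))

section profile

variable {m A x₀ c x t : ℝ}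

theorem continuous_profile (hm : 1 ≤ m) :
    Continuous fun p : ℝ × ℝ => profile m A x₀ c p.1 p.2 := by
  have hα : 0 ≤ (m - 1) / m := div_nonneg (by linarith) (by linarith)
  have hp : 0 ≤ 1 / (m - 1) := one_div_nonneg.2 (by linarith)
  exact ((continuous_const.sub (continuous_profileBase hα)).max continuous_const).rpow_const
    fun _ => Or.inr hp

theorem profile_zero_left (hm : 1 < m) (hA : 0 ≤ A) :
    profile m A x₀ c 0 t = A ^ (1 / (m - 1)) := by
  rw [profile, profileBase_zero_left (div_ne_zero (by linarith) (by linarith)), sub_zero,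
    max_eq_left hA]

theorem hasDerivAt_profile_time (hm : 1 < m) (hx₀ : 0 ≤ x₀)
    (hpos : 0 < A - profileBase x₀ c ((m - 1) / m) x t) :
    HasDerivAt (fun τ => profile m A x₀ c x τ)
      (c / m * profileBase x₀ c ((m - 1) / m) x t *
        (A - profileBase x₀ c ((m - 1) / m) x t) ^ (1 / (m - 1) - 1)) t := by
  have hB := (hasDerivAt_profileBase_time (α := (m - 1) / m) (x := x) (c := c) (t := t)
    hx₀).const_sub A
  refine ((hB.rpow_const (p := 1 / (m - 1)) (Or.inl hpos.ne')).congr_of_eventuallyEq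
    (max_zero_rpow_eventuallyEq hB.continuousAt hpos _)).congr_deriv ?_
  have : m ≠ 0 := by linarith
  have : m - 1 ≠ 0 := by linarith
  field_simp

theorem hasDerivAt_profile_rpow_space (hm : 1 < m) (hx₀ : 0 ≤ x₀) (hx : x ≠ 0)
    (hpos : 0 < A - profileBase x₀ c ((m - 1) / m) x t) :
    HasDerivAt (fun ξ => profile m A x₀ c ξ t ^ m)
      (-((A - profileBase x₀ c ((m - 1) / m) x t) ^ (1 / (m - 1)) *
        (profileBase x₀ c ((m - 1) / m) x t / x))) x := by
  have hB := (hasDerivAt_profileBase_space (α := (m - 1) / m) (c := c) (t := t)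
    hx₀ hx).const_sub A
  have hpow : (fun ξ => profile m A x₀ c ξ t ^ m) =ᶠ[𝓝 x]
      fun ξ => (A - profileBase x₀ c ((m - 1) / m) ξ t) ^ (1 / (m - 1) * m) :=
    (hB.continuousAt.eventually (lt_mem_nhds hpos)).mono fun ξ hξ => by
      simp only [profile, max_eq_left hξ.le, rpow_mul hξ.le]
  have : m ≠ 0 := by linarith
  have : m - 1 ≠ 0 := by linarith
  have hexp : 1 / (m - 1) * m - 1 = 1 / (m - 1) := by
    field_simp
    ring
  refine ((hB.rpow_const (p := 1 / (m - 1) * m) (Or.inl hpos.ne')).congr_of_eventuallyEq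
    hpow).congr_deriv ?_
  rw [hexp]
  field_simp

theorem hasDerivAt_rpow_mul_profileBase_div (hm : 1 < m) (hx₀ : 0 ≤ x₀) (hx : x ≠ 0)
    (hpos : 0 < A - profileBase x₀ c ((m - 1) / m) x t) :
    HasDerivAt (fun ξ => (A - profileBase x₀ c ((m - 1) / m) ξ t) ^ (1 / (m - 1)) *
        (profileBase x₀ c ((m - 1) / m) ξ t / ξ))
      (-(A / m * profileBase x₀ c ((m - 1) / m) x t *
        (A - profileBase x₀ c ((m - 1) / m) x t) ^ (1 / (m - 1) - 1) / x ^ 2)) x := by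
  have hB := hasDerivAt_profileBase_space (α := (m - 1) / m) (c := c) (t := t) hx₀ hx
  refine (((hB.const_sub A).rpow_const (Or.inl hpos.ne')).mul
    (hB.div (hasDerivAt_id' x) hx)).congr_deriv ?_
  simp only [Pi.div_apply, rpow_sub_one hpos.ne']
  have : m ≠ 0 := by linarith
  have : m - 1 ≠ 0 := by linarith
  field_simp
  ring

theorem profile_solves_pde (hm : 1 < m) (hx₀ : 0 ≤ x₀) (hx : x ≠ 0)
    (hpos : 0 < c - profileBase x₀ c ((m - 1) / m) x t) :
    DifferentiableAt ℝ (fun τ => profile m c x₀ c x τ) t ∧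
    DifferentiableAt ℝ (fun ξ => profile m c x₀ c ξ t ^ m) x ∧
    DifferentiableAt ℝ (deriv fun ξ => profile m c x₀ c ξ t ^ m) x ∧
    deriv (fun τ => profile m c x₀ c x τ) t =
      x ^ 2 * iteratedDeriv 2 (fun ξ => profile m c x₀ c ξ t ^ m) x := by
  have htime := hasDerivAt_profile_time hm hx₀ hpos
  have hspace : ∀ᶠ ξ in 𝓝 x, HasDerivAt (fun ξ => profile m c x₀ c ξ t ^ m)
      (-((c - profileBase x₀ c ((m - 1) / m) ξ t) ^ (1 / (m - 1)) *
        (profileBase x₀ c ((m - 1) / m) ξ t / ξ))) ξ := by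
    have hZ := (hasDerivAt_profileBase_space (α := (m - 1) / m) (c := c) (t := t)
      hx₀ hx).continuousAt.const_sub c
    filter_upwards [hZ.eventually (lt_mem_nhds hpos), eventually_ne_nhds hx] with ξ hξ hξ0
    exact hasDerivAt_profile_rpow_space hm hx₀ hξ0 hξ
  have hspace2 := hasDerivAt_deriv_of_eventually hspace
    (hasDerivAt_rpow_mul_profileBase_div hm hx₀ hx hpos).neg
  refine ⟨htime.differentiableAt, hspace.self_of_nhds.differentiableAt,
    hspace2.differentiableAt, ?_⟩
  rw [htime.deriv, iteratedDeriv_succ, iteratedDeriv_one, hspace2.deriv]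
  field_simp

end profile

/-- **Explicit profiles `U_{x₀}` (Eq. (1.17), cf. [GKKV, Section 7]).** Let `m > 1`,
`K > 0`, `x₀ > 0` and `c = K^{m-1}`.  Define
`U_{x₀}(x,t) = [K^{m-1} - ((|x|/x₀) e^{-ct})^{(m-1)/m}]₊^{1/(m-1)}`.  Then `U_{x₀}` is
continuous on `ℝ × (0,∞)` with `U_{x₀}(0,t) = K` for all `t > 0`, and on the open set
`{(x,t) : x ≠ 0, K^{m-1} - ((|x|/x₀) e^{-ct})^{(m-1)/m} > 0}` it is a classical solution
of `∂ₜ U = x² ∂ₓₓ(U^m)`. -/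
theorem explicit_profile_solution
    (m K x₀ c : ℝ) (hm : 1 < m) (hK : 0 < K) (hx₀ : 0 < x₀) (hc : c = K ^ (m - 1))
    (U : ℝ → ℝ → ℝ)
    (hU : ∀ x t, U x t =
      (max (K ^ (m - 1) - ((|x| / x₀) * Real.exp (-c * t)) ^ ((m - 1) / m)) 0)
        ^ (1 / (m - 1))) :
    ContinuousOn (fun p : ℝ × ℝ => U p.1 p.2) (univ ×ˢ Ioi 0) ∧
    (∀ t : ℝ, 0 < t → U 0 t = K) ∧
    (∀ x t : ℝ, 0 < t → x ≠ 0 →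
      0 < K ^ (m - 1) - ((|x| / x₀) * Real.exp (-c * t)) ^ ((m - 1) / m) →
      DifferentiableAt ℝ (fun τ => U x τ) t ∧
      DifferentiableAt ℝ (fun ξ => U ξ t ^ m) x ∧
      DifferentiableAt ℝ (deriv (fun ξ => U ξ t ^ m)) x ∧
      deriv (fun τ => U x τ) t = x ^ 2 * iteratedDeriv 2 (fun ξ => U ξ t ^ m) x) := by
  subst hc
  obtain rfl : U = profile m (K ^ (m - 1)) x₀ (K ^ (m - 1)) := funext fun x => funext (hU x)
  refine ⟨(continuous_profile hm.le).continuousOn, fun t _ => ?_,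
    fun x t _ hx hpos => profile_solves_pde hm hx₀.le hx hpos⟩
  rw [profile_zero_left hm (by positivity), one_div, rpow_rpow_inv hK.le (by linarith)]
end

section
/- Let N ≥ 1 be an integer and let w : ℝ × (0,∞) → ℝ be a classical solution of the one-dimensional heat equation ∂_t w(s,t) = ∂_ss w(s,t) (with w twice continuously differentiable in s and once in t). Define u(r,t) = w(log r + (N−2)t, t) for r > 0, t > 0. Then u satisfies the radial form of the linear (m = 1) nonhomogeneous equation: r^{−2} ∂_t u(r,t) = ∂_rr u(r,t) + ((N−1)/r) ∂_r u(r,t) for all r > 0, t > 0. -/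
/-!
With `s = log r + (N - 2) t`, the chain rule gives `∂ₜu = (N - 2) wₛ + wₜ`, `∂ᵣu = wₛ / r` and
`∂ᵣᵣu = (wₛₛ - wₛ) / r²`. Hence `r² (∂ᵣᵣu + (N - 1)/r ∂ᵣu) = wₛₛ + (N - 2) wₛ`, which equals
`∂ₜu` because `wₜ = wₛₛ`. The only analytic input is the chain rule for `τ ↦ w (s(τ), τ)`, valid
because both partial derivatives of `w` are continuous.
-/

open Real Filter Topology

theorem HasDerivAt.comp_curve_of_continuousAt_partials {w ws wt : ℝ → ℝ → ℝ} {γ : ℝ → ℝ}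
    {γ' t : ℝ}
    (hws : ∀ s t, HasDerivAt (fun σ => w σ t) (ws s t) s)
    (hwt : ∀ s t, HasDerivAt (fun τ => w s τ) (wt s t) t)
    (hwscont : ContinuousAt (fun p : ℝ × ℝ => ws p.1 p.2) (γ t, t))
    (hwtcont : ContinuousAt (fun p : ℝ × ℝ => wt p.1 p.2) (γ t, t))
    (hγ : HasDerivAt γ γ' t) :
    HasDerivAt (fun τ => w (γ τ) τ) (γ' * ws (γ t) t + wt (γ t) t) t := by
  let toCLM : ℝ → ℝ →L[ℝ] ℝ := ContinuousLinearMap.toSpanSingleton ℝ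
  have hcont : Continuous toCLM := ContinuousLinearMap.toSpanSingletonCLE.continuous
  have hw : HasFDerivAt (Function.uncurry w)
      ((toCLM (ws (γ t) t)).coprod (toCLM (wt (γ t) t))) (γ t, t) :=
    (hasStrictFDerivAt_uncurry_coprod (f₁ := fun s t => toCLM (ws s t))
      (f₂ := fun s t => toCLM (wt s t))
      (.of_forall fun p => hasDerivAt_iff_hasFDerivAt.1 (hws p.1 p.2))
      (.of_forall fun p => hasDerivAt_iff_hasFDerivAt.1 (hwt p.1 p.2))
      (hcont.continuousAt.comp hwscont) (hcont.continuousAt.comp hwtcont)).hasFDerivAt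
  have hcomp : HasDerivAt (fun τ => w (γ τ) τ)
      ((toCLM (ws (γ t) t)).coprod (toCLM (wt (γ t) t)) (γ', 1)) t :=
    hw.comp_hasDerivAt (f := fun τ => (γ τ, τ)) t (hγ.prodMk (hasDerivAt_id' t))
  simpa [toCLM, mul_comm] using hcomp

theorem hasDerivAt_comp_log {v : ℝ → ℝ} {v' r : ℝ} (hv : HasDerivAt v v' (log r))
    (hr : 0 < r) : HasDerivAt (fun ρ => v (log ρ)) (v' / r) r := by
  rw [div_eq_mul_inv]
  exact hv.comp r (hasDerivAt_log hr.ne')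

theorem iteratedDeriv_two_comp_log {v v' v'' : ℝ → ℝ} (hv : ∀ σ, HasDerivAt v (v' σ) σ)
    (hv' : ∀ σ, HasDerivAt v' (v'' σ) σ) {r : ℝ} (hr : 0 < r) :
    iteratedDeriv 2 (fun ρ => v (log ρ)) r = (v'' (log r) - v' (log r)) / r ^ 2 := by
  have hderiv : deriv (fun ρ => v (log ρ)) =ᶠ[𝓝 r] fun ρ => v' (log ρ) / ρ := by
    filter_upwards [eventually_gt_nhds hr] with ρ hρ
    exact (hasDerivAt_comp_log (hv _) hρ).deriv
  rw [iteratedDeriv_succ, iteratedDeriv_one, hderiv.deriv_eq]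
  have hderiv' : HasDerivAt (fun ρ => v' (log ρ) / ρ)
      ((v'' (log r) / r * r - v' (log r) * 1) / r ^ 2) r :=
    (hasDerivAt_comp_log (hv' _) hr).div (hasDerivAt_id' r) hr.ne'
  rw [hderiv'.deriv]
  field_simp

theorem change_of_variables_linear_general
    (N : ℕ)
    (w ws wss wt : ℝ → ℝ → ℝ)
    (hws : ∀ s t, HasDerivAt (fun σ => w σ t) (ws s t) s)
    (hwss : ∀ s t, HasDerivAt (fun σ => ws σ t) (wss s t) s)
    (hwt : ∀ s t, HasDerivAt (fun τ => w s τ) (wt s t) t)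
    (hwscont : Continuous (fun p : ℝ × ℝ => ws p.1 p.2))
    (hwtcont : Continuous (fun p : ℝ × ℝ => wt p.1 p.2))
    (hheat : ∀ s t : ℝ, 0 < t → wt s t = wss s t) :
    ∀ r t : ℝ, 0 < r → 0 < t →
      r ^ (-2 : ℝ) * deriv (fun τ => w (Real.log r + ((N : ℝ) - 2) * τ) τ) t
        = iteratedDeriv 2 (fun ρ => w (Real.log ρ + ((N : ℝ) - 2) * t) t) r
          + (((N : ℝ) - 1) / r) * deriv (fun ρ => w (Real.log ρ + ((N : ℝ) - 2) * t) t) r := by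
  intro r t hr ht
  set c : ℝ := (N : ℝ) - 2
  set s : ℝ := log r + c * t
  have hline : HasDerivAt (fun τ => log r + c * τ) c t := by
    simpa using ((hasDerivAt_id t).const_mul c).const_add (log r)
  have htime := hline.comp_curve_of_continuousAt_partials hws hwt
    hwscont.continuousAt hwtcont.continuousAt
  have hspace := hasDerivAt_comp_log (v := fun σ => w (σ + c * t) t)
    ((hws s t).comp_add_const _ _) hr
  have hspace2 := iteratedDeriv_two_comp_log (v := fun σ => w (σ + c * t) t)
    (v' := fun σ => ws (σ + c * t) t) (v'' := fun σ => wss (σ + c * t) t)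
    (fun σ => (hws _ t).comp_add_const _ _) (fun σ => (hwss _ t).comp_add_const _ _) hr
  rw [htime.deriv, hspace.deriv, hspace2, hheat s t ht, rpow_neg hr.le, rpow_two]
  field_simp
  ring

/-- **Linear case `m = 1` (Eq. (2.2)-(2.3)).** Let `N ≥ 1` and let `w` be a classical
solution of the one-dimensional heat equation `∂ₜ w = ∂ₛₛ w` (given together with its
continuous partial derivatives `wₛ`, `wₛₛ`, `wₜ`).  Then `u(r,t) = w(log r + (N-2)t, t)`
satisfies the radial form of the linear nonhomogeneous equation
`r^{-2} ∂ₜ u = ∂ᵣᵣ u + ((N-1)/r) ∂ᵣ u` for all `r > 0`, `t > 0`. -/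
theorem change_of_variables_linear
    (N : ℕ) (hN : 1 ≤ N)
    (w ws wss wt : ℝ → ℝ → ℝ)
    (hws : ∀ s t, HasDerivAt (fun σ => w σ t) (ws s t) s)
    (hwss : ∀ s t, HasDerivAt (fun σ => ws σ t) (wss s t) s)
    (hwt : ∀ s t, HasDerivAt (fun τ => w s τ) (wt s t) t)
    (hwscont : Continuous (fun p : ℝ × ℝ => ws p.1 p.2))
    (hwsscont : Continuous (fun p : ℝ × ℝ => wss p.1 p.2))
    (hwtcont : Continuous (fun p : ℝ × ℝ => wt p.1 p.2))
    (hheat : ∀ s t : ℝ, 0 < t → wt s t = wss s t) :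
    ∀ r t : ℝ, 0 < r → 0 < t →
      r ^ (-2 : ℝ) * deriv (fun τ => w (Real.log r + ((N : ℝ) - 2) * τ) τ) t
        = iteratedDeriv 2 (fun ρ => w (Real.log ρ + ((N : ℝ) - 2) * t) t) r
          + (((N : ℝ) - 1) / r) * deriv (fun ρ => w (Real.log ρ + ((N : ℝ) - 2) * t) t) r :=
  change_of_variables_linear_general N w ws wss wt hws hwss hwt hwscont hwtcont hheat
end
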